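/- arXiv:1202.6095 — 5 statements merged into one kernel-verified Lean document; each statement's English description precedes it below -/
import Mathlib

section
/- Fix an integer t ≥ 1. For every sequence of integers (i_n) indexed by n with t ≤ i_n ≤ n−1 for each n, the miscorrection-adjusted failure probability satisfies lim_{n→∞} P_n(i_n) = 1. -/
/-!
Each miscorrection term is `O(1/n)`. Write `δ = j + r + 1`, so that `ℓ = j + (i - r)`.
Then `C(n,ℓ)·C(ℓ,j) = C(n,j)·C(n-j,i-r)`, and lowering the lower index of `C(n,·)` from `i`
to `i - r` costs at most a factor `(n/(n-i))^r`; this is paid for by the complementary factor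
`C(n-ℓ-1,r)·(n-ℓ) ≤ (n-ℓ)^(r+1) ≤ (2(n-i))^(r+1)`. Altogether the term is at most
`2^δ n^δ / ((n+1)^t n) ≤ 2^t / n`, so `1 - t²2^t/n ≤ P_n(i) ≤ 1`.
-/

open Finset Filter

/-- `ℓ(i,δ,j) = i − δ + 2j + 1` (natural subtraction; the defining ranges guarantee
`i ≥ δ` wherever this is used). -/
def ell (i δ j : ℕ) : ℕ := i - δ + 2 * j + 1

/-- `V(n,i,δ,j) = C(ℓ, ℓ−j)·C(n−ℓ−1, δ−1−j)/C(n−1,i)`. -/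
noncomputable def V (n i δ j : ℕ) : ℝ :=
  (Nat.choose (ell i δ j) (ell i δ j - j) : ℝ) *
    (Nat.choose (n - ell i δ j - 1) (δ - 1 - j) : ℝ) / (Nat.choose (n - 1) i : ℝ)

/-- Binomial approximation to the weight distribution of a `t`-error-correcting
binary primitive BCH code of length `n`: `Â_l = (n+1)^{−t}·C(n,l)`. -/
noncomputable def Ahat (t n l : ℕ) : ℝ :=
  ((n : ℝ) + 1) ^ (-(t : ℤ)) * (Nat.choose n l : ℝ)

/-- `P_n(i)`: probability that a bit decoded by bounded-distance decoding remains in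
error given it was initially in error and `i` of the other `n−1` positions are in error. -/
noncomputable def Pn (t n i : ℕ) : ℝ :=
  if i < t then 0
  else if i ≤ n - t - 2 then
    1 - ∑ δ ∈ Icc 1 t, ∑ j ∈ range δ,
      (((n : ℝ) - (ell i δ j : ℝ)) / (n : ℝ)) * Ahat t n (ell i δ j) * V n i δ j
  else 1

lemma Nat.choose_sub_mul_pow_le (N a r : ℕ) (hra : r ≤ a) (haN : a ≤ N) :
    N.choose (a - r) * (N - a) ^ r ≤ N.choose a * N ^ r := by
  induction r with
  | zero => simp
  | succ r ih =>
    have hstep : N.choose (a - (r + 1)) * (N - a) ≤ N.choose (a - r) * N := by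
      have hpascal := Nat.choose_succ_right_eq N (a - (r + 1))
      rw [show a - (r + 1) + 1 = a - r by omega] at hpascal
      calc N.choose (a - (r + 1)) * (N - a)
          ≤ N.choose (a - (r + 1)) * (N - (a - (r + 1))) := by gcongr; omega
        _ = N.choose (a - r) * (a - r) := hpascal.symm
        _ ≤ N.choose (a - r) * N := by gcongr; omega
    calc N.choose (a - (r + 1)) * (N - a) ^ (r + 1)
        = N.choose (a - (r + 1)) * (N - a) * (N - a) ^ r := by ring
      _ ≤ N.choose (a - r) * N * (N - a) ^ r := by gcongr
      _ = N.choose (a - r) * (N - a) ^ r * N := by ring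
      _ ≤ N.choose a * N ^ r * N := Nat.mul_le_mul_right _ (ih (by omega))
      _ = N.choose a * N ^ (r + 1) := by ring

lemma choose_ell_mul_le {n i δ j : ℕ} (hj : j < δ) (hδi : δ ≤ i) (hin : i + δ ≤ n) :
    n.choose (ell i δ j) * (ell i δ j).choose j * (n - ell i δ j - 1).choose (δ - 1 - j) *
      (n - ell i δ j) ≤ 2 ^ (δ - j) * n ^ δ * (n - 1).choose i := by
  obtain ⟨r, rfl⟩ : ∃ r, δ = j + r + 1 := ⟨δ - 1 - j, by omega⟩
  have hell : ell i (j + r + 1) j = j + (i - r) := by unfold ell; omega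
  rw [hell, show j + r + 1 - 1 - j = r by omega]
  set m := n - (j + (i - r))
  have hpascal : n.choose i * (n - i) = (n - 1).choose i * n := by
    have h := Nat.choose_mul_succ_eq (n - 1) i
    rw [Nat.sub_add_cancel (by omega)] at h
    exact h.symm
  have hcompl : (m - 1).choose r * m ≤ (2 * (n - i)) ^ (r + 1) :=
    calc (m - 1).choose r * m ≤ m ^ r * m := by
          gcongr; exact (Nat.choose_le_pow _ _).trans (Nat.pow_le_pow_left (by omega) r)
      _ = m ^ (r + 1) := by ring
      _ ≤ (2 * (n - i)) ^ (r + 1) := by gcongr; omega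
  calc n.choose (j + (i - r)) * (j + (i - r)).choose j * (m - 1).choose r * m
      = n.choose j * (n - j).choose (i - r) * ((m - 1).choose r * m) := by
        rw [Nat.choose_mul (by omega), Nat.add_sub_cancel_left]; ring
    _ ≤ n ^ j * n.choose (i - r) * (2 * (n - i)) ^ (r + 1) := by
        gcongr
        · exact Nat.choose_le_pow _ _
        · omega
    _ = 2 ^ (r + 1) * n ^ j * (n.choose (i - r) * (n - i) ^ r * (n - i)) := by ring
    _ ≤ 2 ^ (r + 1) * n ^ j * (n.choose i * n ^ r * (n - i)) := by
        gcongr 2 ^ (r + 1) * n ^ j * (?_ * (n - i))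
        exact Nat.choose_sub_mul_pow_le n i r (by omega) (by omega)
    _ = 2 ^ (r + 1) * n ^ j * n ^ r * (n.choose i * (n - i)) := by ring
    _ = 2 ^ (j + r + 1 - j) * n ^ (j + r + 1) * (n - 1).choose i := by
        rw [hpascal, show j + r + 1 - j = r + 1 by omega]; ring

noncomputable def miscorrectionTerm (t n i δ j : ℕ) : ℝ :=
  ((n : ℝ) - (ell i δ j : ℝ)) / (n : ℝ) * Ahat t n (ell i δ j) * V n i δ j

lemma miscorrectionTerm_nonneg {t n i δ j : ℕ} (hℓ : ell i δ j ≤ n) :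
    0 ≤ miscorrectionTerm t n i δ j := by
  have hℓR : (ell i δ j : ℝ) ≤ n := by exact_mod_cast hℓ
  unfold miscorrectionTerm Ahat V
  have : (0 : ℝ) ≤ (n - ell i δ j) / n := div_nonneg (by linarith) n.cast_nonneg
  positivity

lemma miscorrectionTerm_le {t n i δ j : ℕ} (hj : j < δ) (hδt : δ ≤ t) (hδi : δ ≤ i)
    (hin : i + δ ≤ n) : miscorrectionTerm t n i δ j ≤ 2 ^ t / n := by
  set ℓ := ell i δ j with hℓ_def
  have hℓ : ℓ ≤ n := by rw [hℓ_def]; unfold ell; omega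
  have hn : (0 : ℝ) < n := by exact_mod_cast (show 0 < n by omega)
  have hD : (0 : ℝ) < (n - 1).choose i := by exact_mod_cast Nat.choose_pos (by omega)
  have hcount :
      ((n.choose ℓ * ℓ.choose j * (n - ℓ - 1).choose (δ - 1 - j) * (n - ℓ) : ℕ) : ℝ) ≤
        2 ^ t * ((n : ℝ) + 1) ^ t * (n - 1).choose i :=
    calc _ ≤ ((2 ^ (δ - j) * n ^ δ * (n - 1).choose i : ℕ) : ℝ) := by
          exact_mod_cast choose_ell_mul_le hj hδi hin
      _ = 2 ^ (δ - j) * (n : ℝ) ^ δ * (n - 1).choose i := by push_cast; ring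
      _ ≤ 2 ^ t * ((n : ℝ) + 1) ^ t * (n - 1).choose i := by
          have h2 : (2 : ℝ) ^ (δ - j) ≤ 2 ^ t := pow_le_pow_right₀ (by norm_num) (by omega)
          have hn1 : (n : ℝ) ^ δ ≤ ((n : ℝ) + 1) ^ t :=
            (pow_le_pow_left₀ hn.le (by linarith) δ).trans
              (pow_le_pow_right₀ (by linarith) hδt)
          gcongr
  unfold miscorrectionTerm Ahat V
  rw [← hℓ_def, Nat.choose_symm (by rw [hℓ_def]; unfold ell; omega), zpow_neg, zpow_natCast]
  push_cast [hℓ] at hcount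
  calc _ = (n.choose ℓ * ℓ.choose j * (n - ℓ - 1).choose (δ - 1 - j) * ((n : ℝ) - ℓ)) /
        (((n : ℝ) + 1) ^ t * (n - 1).choose i * n) := by field_simp
    _ ≤ 2 ^ t * ((n : ℝ) + 1) ^ t * (n - 1).choose i /
        (((n : ℝ) + 1) ^ t * (n - 1).choose i * n) := by gcongr
    _ = 2 ^ t / n := by field_simp

lemma sum_miscorrectionTerm_nonneg {t n i : ℕ} (hti : t ≤ i) (hin : i + t ≤ n) :
    0 ≤ ∑ δ ∈ Icc 1 t, ∑ j ∈ range δ, miscorrectionTerm t n i δ j := by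
  refine sum_nonneg fun δ hδ => sum_nonneg fun j hj => miscorrectionTerm_nonneg ?_
  rw [mem_Icc] at hδ
  rw [mem_range] at hj
  unfold ell
  omega

lemma sum_miscorrectionTerm_le {t n i : ℕ} (hti : t ≤ i) (hin : i + t ≤ n) :
    ∑ δ ∈ Icc 1 t, ∑ j ∈ range δ, miscorrectionTerm t n i δ j ≤ t * t * 2 ^ t / n := by
  have hinner : ∀ δ ∈ Icc 1 t,
      ∑ j ∈ range δ, miscorrectionTerm t n i δ j ≤ t * (2 ^ t / n) := by
    intro δ hδ
    rw [mem_Icc] at hδ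
    calc _ ≤ (range δ).card • ((2 : ℝ) ^ t / n) :=
          sum_le_card_nsmul _ _ _ fun j hj =>
            miscorrectionTerm_le (mem_range.mp hj) hδ.2 (by omega) (by omega)
      _ ≤ t * (2 ^ t / n) := by
          rw [card_range, nsmul_eq_mul]
          gcongr
          exact_mod_cast hδ.2
  calc _ ≤ (Icc 1 t).card • ((t : ℝ) * (2 ^ t / n)) := sum_le_card_nsmul _ _ _ hinner
    _ = t * t * 2 ^ t / n := by rw [Nat.card_Icc, nsmul_eq_mul]; push_cast; ring

lemma Pn_le_one (t n i : ℕ) : Pn t n i ≤ 1 := by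
  unfold Pn
  split_ifs with hit hin
  · exact zero_le_one
  · exact sub_le_self _ (sum_miscorrectionTerm_nonneg (not_lt.mp hit) (by omega))
  · exact le_rfl

lemma one_sub_le_Pn {t n i : ℕ} (hti : t ≤ i) : 1 - t * t * 2 ^ t / n ≤ Pn t n i := by
  unfold Pn
  split_ifs with hit hin
  · omega
  · exact sub_le_sub_left (sum_miscorrectionTerm_le hti (by omega)) 1
  · exact sub_le_self _ (by positivity)

theorem stmt0_general (t : ℕ) (i : ℕ → ℕ)
    (hi : ∀ n, 4 * t + 4 < n → t ≤ i n ∧ i n ≤ n - 1) :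
    Tendsto (fun n => Pn t n (i n)) atTop (nhds 1) := by
  have hlower : Tendsto (fun n : ℕ => 1 - (t : ℝ) * t * 2 ^ t / n) atTop (nhds 1) := by
    simpa using
      tendsto_const_nhds.sub (tendsto_const_div_atTop_nhds_zero_nat ((t : ℝ) * t * 2 ^ t))
  refine tendsto_of_tendsto_of_tendsto_of_le_of_le' hlower tendsto_const_nhds ?_
    (Eventually.of_forall fun n => Pn_le_one t n (i n))
  filter_upwards [eventually_gt_atTop (4 * t + 4)] with n hn
  exact one_sub_le_Pn (hi n hn).1

/-- for `t ≥ 1` and any sequence `i_n` with `t ≤ i_n ≤ n−1`,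
`lim_{n→∞} P_n(i_n) = 1`. -/
theorem stmt0 (t : ℕ) (ht : 1 ≤ t) (i : ℕ → ℕ)
    (hi : ∀ n, 4 * t + 4 < n → t ≤ i n ∧ i n ≤ n - 1) :
    Tendsto (fun n => Pn t n (i n)) atTop (nhds 1) :=
  stmt0_general t i hi
end

section
/- Fix an integer t ≥ 1. For every sequence of integers (i_n) indexed by n with t+1 ≤ i_n ≤ n−t−1 for each n, the miscorrection probability satisfies lim_{n→∞} n·Q_n(i_n) = 1/(t−1)!, i.e., Q_n(i) = (1/((t−1)!·n))·(1+o(1)) uniformly over t+1 ≤ i ≤ n−t−1. -/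
open Finset Filter

/-- `Q_n(i)`: probability that a bit decoded by bounded-distance decoding becomes
erroneous given it was initially correct and `i` of the other `n−1` positions are
in error. -/
noncomputable def Qn (t n i : ℕ) : ℝ :=
  if i ≤ t then 0
  else if i ≤ n - t - 1 then
    ∑ δ ∈ Icc 1 t, ∑ j ∈ range δ,
      (((ell i δ j : ℝ) + 1) / (n : ℝ)) * Ahat t n (ell i δ j + 1) * V n i δ j
  else 1

/-!
For `t < i < n - t` every summand of `Q_n(i)` collapses. First
`(ℓ + 1) Â_{ℓ+1} = n (n+1)^{-t} C(n-1, ℓ)`. Then `C(n-1, ℓ) C(ℓ, ℓ-j) C(n-1-ℓ, δ-1-j)` counts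
ordered splittings of the `n - 1` other positions into blocks of sizes
`ℓ - j, j, δ - 1 - j, n - 1 - i - j`; regrouping the blocks gives
`C(n-1, i) C(i, δ-1-j) C(n-1-i, j)`, which cancels the denominator of `V`. Vandermonde then
sums the inner sum to `C(n-1, δ-1)`, so `Q_n(i) = (n+1)^{-t} ∑_{δ=1}^t C(n-1, δ-1)` does not
depend on `i`. Hence `n Q_n(i) = (n+1)^{-t} ∑_{δ=1}^t δ C(n, δ)`, and as `C(n, δ) ~ n^δ / δ!`
only `δ = t` survives in the limit, contributing `t / t! = 1 / (t-1)!`.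
-/

open Asymptotics
open scoped Nat Topology

theorem Nat.choose_mul_choose_mul_choose_mul_factorial (p q r s : ℕ) :
    (p + q + (r + s)).choose (p + q) * (p + q).choose p * (r + s).choose r *
      (p ! * q ! * r ! * s !) = (p + q + (r + s))! := by
  have h₁ := Nat.add_choose_mul_factorial_mul_factorial q p
  have h₂ := Nat.add_choose_mul_factorial_mul_factorial s r
  have h₃ := Nat.add_choose_mul_factorial_mul_factorial (r + s) (p + q)
  rw [add_comm q p] at h₁
  rw [add_comm s r] at h₂
  rw [add_comm (r + s) (p + q)] at h₃
  rw [← h₃, ← h₁, ← h₂]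
  ring

theorem Nat.choose_mul_choose_mul_choose_comm (p q r s : ℕ) :
    (p + q + (r + s)).choose (p + q) * (p + q).choose p * (r + s).choose r =
      (p + r + (q + s)).choose (p + r) * (p + r).choose p * (q + s).choose q := by
  refine Nat.eq_of_mul_eq_mul_right (by positivity : 0 < p ! * q ! * r ! * s !) ?_
  rw [Nat.choose_mul_choose_mul_choose_mul_factorial,
    show p ! * q ! * r ! * s ! = p ! * r ! * q ! * s ! from by ring,
    Nat.choose_mul_choose_mul_choose_mul_factorial, add_add_add_comm]

theorem add_one_div_mul_Ahat (t : ℕ) {n : ℕ} (hn : n ≠ 0) (l : ℕ) :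
    ((l : ℝ) + 1) / n * Ahat t n (l + 1) = ((n : ℝ) + 1) ^ (-(t : ℤ)) * (n - 1).choose l := by
  have h := Nat.add_one_mul_choose_eq (n - 1) l
  rw [Nat.sub_add_cancel (Nat.one_le_iff_ne_zero.mpr hn)] at h
  have h' : (n : ℝ) * (n - 1).choose l = n.choose (l + 1) * ((l : ℝ) + 1) := by exact_mod_cast h
  have hn' : (n : ℝ) ≠ 0 := Nat.cast_ne_zero.mpr hn
  calc ((l : ℝ) + 1) / n * Ahat t n (l + 1)
      = ((n : ℝ) + 1) ^ (-(t : ℤ)) * (n.choose (l + 1) * ((l : ℝ) + 1) / n) := by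
        rw [Ahat]; ring
    _ = ((n : ℝ) + 1) ^ (-(t : ℤ)) * (n - 1).choose l := by
        rw [← h', mul_div_cancel_left₀ _ hn']

theorem add_one_div_mul_Ahat_mul_V (t : ℕ) {n i δ j : ℕ} (hj : j < δ) (hδ : δ ≤ i)
    (hij : i + j < n) :
    ((ell i δ j : ℝ) + 1) / n * Ahat t n (ell i δ j + 1) * V n i δ j =
      ((n : ℝ) + 1) ^ (-(t : ℤ)) * ((n - 1 - i).choose j * i.choose (δ - 1 - j)) := by
  -- `p, j, r, s` are the four block sizes `ℓ - j, j, δ - 1 - j, n - 1 - i - j`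
  obtain ⟨p, r, s, rfl, rfl, rfl⟩ :
      ∃ p r s, i = p + r ∧ δ = r + j + 1 ∧ n = p + j + (r + s) + 1 :=
    ⟨i + j + 1 - δ, δ - 1 - j, n - 1 - i - j, by omega, by omega, by omega⟩
  have hℓ : ell (p + r) (r + j + 1) j = p + j := by unfold ell; omega
  have hswap : ((p + j + (r + s)).choose (p + j) * (p + j).choose p * (r + s).choose r : ℝ) =
      (p + j + (r + s)).choose (p + r) * (p + r).choose p * (j + s).choose j := by
    have h := Nat.choose_mul_choose_mul_choose_comm p j r s
    rw [add_add_add_comm p r j s] at h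
    exact_mod_cast h
  have hpos : ((p + j + (r + s)).choose (p + r) : ℝ) ≠ 0 :=
    Nat.cast_ne_zero.mpr (Nat.choose_pos (by omega)).ne'
  rw [hℓ, add_one_div_mul_Ahat t (by omega), V, hℓ, Nat.add_sub_cancel, Nat.add_sub_cancel,
    show p + j + (r + s) + 1 - (p + j) - 1 = r + s by omega,
    show r + j + 1 - 1 - j = r by omega, show p + j + (r + s) - (p + r) = j + s by omega,
    ← Nat.choose_symm_add]
  rw [mul_assoc, ← mul_div_assoc]
  congr 1
  rw [div_eq_iff hpos]
  linear_combination hswap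

theorem Nat.sum_range_choose_mul_choose_sub (a b k : ℕ) :
    ∑ j ∈ range (k + 1), a.choose j * b.choose (k - j) = (a + b).choose k := by
  rw [Nat.add_choose_eq, Finset.Nat.sum_antidiagonal_eq_sum_range_succ_mk]

theorem Qn_eq {t n i : ℕ} (hti : t < i) (hin : i + t < n) :
    Qn t n i =
      ((n : ℝ) + 1) ^ (-(t : ℤ)) * ∑ δ ∈ Icc 1 t, ((n - 1).choose (δ - 1) : ℝ) := by
  rw [Qn, if_neg (by omega), if_pos (by omega), mul_sum]
  refine sum_congr rfl fun δ hδ => ?_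
  rw [mem_Icc] at hδ
  rw [sum_congr rfl fun j hj => add_one_div_mul_Ahat_mul_V t (mem_range.1 hj) (by omega)
    (by have := mem_range.1 hj; omega), ← mul_sum]
  congr 1
  have h := Nat.sum_range_choose_mul_choose_sub (n - 1 - i) i (δ - 1)
  rw [Nat.sub_add_cancel hδ.1, Nat.sub_add_cancel (by omega : i ≤ n - 1)] at h
  exact_mod_cast h

theorem natCast_mul_Qn_eq {t n i : ℕ} (hti : t < i) (hin : i + t < n) :
    n * Qn t n i = ∑ δ ∈ Icc 1 t, (δ : ℝ) * (n.choose δ * ((n : ℝ) + 1) ^ (-(t : ℤ))) := by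
  rw [Qn_eq hti hin, mul_left_comm, mul_sum, mul_sum]
  refine sum_congr rfl fun δ hδ => ?_
  have h := Nat.add_one_mul_choose_eq (n - 1) (δ - 1)
  rw [Nat.sub_add_cancel (by omega : 1 ≤ n), Nat.sub_add_cancel (mem_Icc.1 hδ).1] at h
  have h' : (n : ℝ) * (n - 1).choose (δ - 1) = n.choose δ * δ := by exact_mod_cast h
  rw [h']
  ring

theorem tendsto_natCast_pow_mul_add_one_zpow {k t : ℕ} (hk : k ≤ t) :
    Tendsto (fun n : ℕ => (n : ℝ) ^ k * ((n : ℝ) + 1) ^ (-(t : ℤ))) atTop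
      (𝓝 (0 ^ (t - k))) := by
  have h := ((tendsto_natCast_div_add_atTop (1 : ℝ)).pow k).mul
    ((tendsto_one_div_add_atTop_nhds_zero_nat (𝕜 := ℝ)).pow (t - k))
  rw [one_pow, one_mul] at h
  refine h.congr fun n => ?_
  have hn : (n : ℝ) + 1 ≠ 0 := by positivity
  rw [div_pow, one_div_pow, zpow_neg, zpow_natCast, ← Nat.add_sub_cancel' hk, pow_add,
    Nat.add_sub_cancel_left]
  field_simp

theorem tendsto_choose_mul_add_one_zpow {k t : ℕ} (hk : k ≤ t) :
    Tendsto (fun n : ℕ => (n.choose k : ℝ) * ((n : ℝ) + 1) ^ (-(t : ℤ))) atTop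
      (𝓝 (0 ^ (t - k) / k !)) := by
  refine ((isEquivalent_choose k).mul IsEquivalent.refl).symm.tendsto_nhds ?_
  refine ((tendsto_natCast_pow_mul_add_one_zpow hk).div_const (k ! : ℝ)).congr fun n => ?_
  simp only [Pi.mul_apply, div_mul_eq_mul_div]

/-- for `t ≥ 1` and any sequence `i_n` with `t+1 ≤ i_n ≤ n−t−1`,
`lim_{n→∞} n·Q_n(i_n) = 1/(t−1)!`. -/
theorem stmt2 (t : ℕ) (ht : 1 ≤ t) (i : ℕ → ℕ)
    (hi : ∀ n, 4 * t + 4 < n → t + 1 ≤ i n ∧ i n ≤ n - t - 1) :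
    Tendsto (fun n : ℕ => (n : ℝ) * Qn t n (i n)) atTop
      (nhds (1 / (Nat.factorial (t - 1) : ℝ))) := by
  have hlim : ∑ δ ∈ Icc 1 t, (δ : ℝ) * (0 ^ (t - δ) / δ !) = 1 / (t - 1)! := by
    rw [sum_eq_single t, Nat.sub_self, pow_zero, ← Nat.mul_factorial_pred (by omega : t ≠ 0)]
    · push_cast
      field_simp
    · intro δ hδ hne
      rw [zero_pow (by have := (mem_Icc.1 hδ).2; omega), zero_div, mul_zero]
    · exact fun h => (h (mem_Icc.2 ⟨ht, le_rfl⟩)).elim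
  rw [← hlim]
  refine (tendsto_finsetSum _ fun δ hδ =>
    (tendsto_choose_mul_add_one_zpow (mem_Icc.1 hδ).2).const_mul (δ : ℝ)).congr' ?_
  filter_upwards [eventually_gt_atTop (4 * t + 4)] with n hn
  obtain ⟨h1, h2⟩ := hi n hn
  exact (natCast_mul_Qn_eq (by omega) (by omega)).symm
end

section
/- Fix an integer t ≥ 2 and reals λ ≥ 0, ρ ≥ 0. Then the scaled density-evolution update converges: lim_{n→∞} (n−1)·f_n(λ/(n−1); ρ/(n−1)) = ρ·φ(λ;t−1) + (1/(t−1)!)·φ(λ;t), where the limit is over n large enough that λ/(n−1) and ρ/(n−1) lie in [0,1]. -/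
/-!
Write `(n-1) f_n(λ/(n-1); ρ/(n-1))` as `∑ᵢ Bₙ(i) (ρ Pₙ(i) + (n-1-ρ) Qₙ(i))`, where `Bₙ` is the
binomial mass with `n-1` trials and success probability `λ/(n-1)`. For fixed `i`, `Bₙ(i)` tends to
the Poisson mass `λⁱ e^{-λ}/i!`, `Pₙ(i) → [t ≤ i]`, `Qₙ(i) → 0` and `(n-1) Qₙ(i) → [t < i]/(t-1)!`.
These follow from `C(n-c, k) ~ nᵏ/k!`: each product `Â_a V` is asymptotic to a constant times
`n^{-s}` with `s = i + t - a - (δ-1-j) ≥ 0`, and `s = 0` only for the `Q`-summand with `δ = t`,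
`j = t-1`, which is where `1/(t-1)!` comes from. Limit and sum are exchanged by Tannery's theorem
with a majorant proportional to `(4λ)ⁱ/(i-t)!`: the weight `Bₙ(i)` cancels the denominator
`C(n-1,i)` of `V`, and `C(n,a) ≤ nᵃ/a!` with `a ≥ i-t`.
-/

open Finset Filter

/-- Density-evolution map
`f_n(x;p) = ∑_{i=0}^{n−1} C(n−1,i)·x^i·(1−x)^{n−1−i}·(p·P_n(i) + (1−p)·Q_n(i))`. -/
noncomputable def fDE (t n : ℕ) (x p : ℝ) : ℝ :=
  ∑ i ∈ range n, (Nat.choose (n - 1) i : ℝ) * x ^ i * (1 - x) ^ (n - 1 - i) *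
    (p * Pn t n i + (1 - p) * Qn t n i)

/-- Poisson tail probability `φ(λ;k) = ∑_{i=k+1}^∞ (λ^i/i!)·e^{−λ}`. -/
noncomputable def phi (lam : ℝ) (k : ℕ) : ℝ :=
  ∑' i : ℕ, if k + 1 ≤ i then lam ^ i / (Nat.factorial i : ℝ) * Real.exp (-lam) else 0

open scoped Nat Topology
open Asymptotics

noncomputable def pTerm (t n i δ j : ℕ) : ℝ :=
  (((n : ℝ) - (ell i δ j : ℝ)) / (n : ℝ)) * Ahat t n (ell i δ j) * V n i δ j

noncomputable def qTerm (t n i δ j : ℕ) : ℝ :=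
  (((ell i δ j : ℝ) + 1) / (n : ℝ)) * Ahat t n (ell i δ j + 1) * V n i δ j

lemma Pn_eq_zero {t n i : ℕ} (hi : i < t) : Pn t n i = 0 := if_pos hi

lemma Pn_eq_one_sub_sum {t n i : ℕ} (hti : t ≤ i) (hin : i ≤ n - t - 2) :
    Pn t n i = 1 - ∑ δ ∈ Icc 1 t, ∑ j ∈ range δ, pTerm t n i δ j := by
  rw [Pn, if_neg (not_lt.mpr hti), if_pos hin]
  rfl

lemma Pn_eq_one {t n i : ℕ} (hti : t ≤ i) (hni : n - t - 2 < i) : Pn t n i = 1 := by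
  rw [Pn, if_neg (not_lt.mpr hti), if_neg (not_le.mpr hni)]

lemma Qn_eq_zero {t n i : ℕ} (hi : i ≤ t) : Qn t n i = 0 := if_pos hi

lemma Qn_eq_sum {t n i : ℕ} (hti : t < i) (hin : i ≤ n - t - 1) :
    Qn t n i = ∑ δ ∈ Icc 1 t, ∑ j ∈ range δ, qTerm t n i δ j := by
  rw [Qn, if_neg (not_le.mpr hti), if_pos hin]
  rfl

lemma Qn_eq_one {t n i : ℕ} (hti : t < i) (hni : n - t - 1 < i) : Qn t n i = 1 := by
  rw [Qn, if_neg (not_le.mpr hti), if_neg (not_le.mpr hni)]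

lemma isEquivalent_natCast_add (c : ℝ) :
    (fun n : ℕ => (n : ℝ) + c) ~[atTop] fun n => (n : ℝ) :=
  IsEquivalent.refl.add_const_of_norm_tendsto_atTop
    (tendsto_norm_atTop_atTop.comp tendsto_natCast_atTop_atTop)

lemma isEquivalent_choose_sub (c k : ℕ) :
    (fun n : ℕ => ((n - c).choose k : ℝ)) ~[atTop] fun n => (n : ℝ) ^ k / k ! := by
  have hsub : (fun n : ℕ => ((n - c : ℕ) : ℝ)) ~[atTop] fun n => (n : ℝ) :=
    (isEquivalent_natCast_add (-c)).congr_left <| by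
      filter_upwards [eventually_ge_atTop c] with n hn
      rw [Nat.cast_sub hn]
      ring
  exact ((isEquivalent_choose k).comp_tendsto (tendsto_sub_atTop_nat c)).trans
    ((hsub.pow k).div IsEquivalent.refl)

lemma Ahat_mul_V_eq (t n a i δ j : ℕ) :
    Ahat t n a * V n i δ j = ((ell i δ j).choose (ell i δ j - j) : ℝ) *
      (((n : ℝ) + 1) ^ (-(t : ℤ)) * n.choose a * (n - (ell i δ j + 1)).choose (δ - 1 - j) /
        (n - 1).choose i) := by
  simp only [Ahat, V, Nat.sub_sub]
  ring

lemma isEquivalent_Ahat_mul_V {t a i δ j s : ℕ} (h : a + (δ - 1 - j) + s = i + t) :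
    (fun n => Ahat t n a * V n i δ j) ~[atTop] fun n =>
      ((ell i δ j).choose (ell i δ j - j) * i ! / (a ! * (δ - 1 - j)!) : ℝ) / (n : ℝ) ^ s := by
  have hA := (IsEquivalent.refl (u := fun _ => ((ell i δ j).choose (ell i δ j - j) : ℝ))).mul
    (((((isEquivalent_natCast_add 1).zpow (-(t : ℤ))).mul (isEquivalent_choose a)).mul
      (isEquivalent_choose_sub (ell i δ j + 1) (δ - 1 - j))).div (isEquivalent_choose_sub 1 i))
  refine (hA.congr_left (.of_eq (funext fun n => (Ahat_mul_V_eq t n a i δ j).symm))).congr_right ?_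
  filter_upwards [eventually_ne_atTop 0] with n hn
  have hn : (n : ℝ) ≠ 0 := Nat.cast_ne_zero.mpr hn
  have hpow : (n : ℝ) ^ a * (n : ℝ) ^ (δ - 1 - j) * (n : ℝ) ^ s = (n : ℝ) ^ i * (n : ℝ) ^ t := by
    rw [← pow_add, ← pow_add, h, pow_add]
  simp only [zpow_neg, zpow_natCast, Pi.mul_apply, Pi.div_apply, Pi.inv_apply, Pi.pow_apply]
  field_simp
  linear_combination ((ell i δ j).choose (ell i δ j - j) : ℝ) * hpow

lemma tendsto_Ahat_mul_V_of_lt {t a i δ j s : ℕ} (h : a + (δ - 1 - j) + s = i + t) (hs : 0 < s) :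
    Tendsto (fun n => Ahat t n a * V n i δ j) atTop (𝓝 0) :=
  (isEquivalent_Ahat_mul_V h).tendsto_nhds_iff.mpr <| tendsto_const_nhds.div_atTop <|
    (tendsto_pow_atTop hs.ne').comp tendsto_natCast_atTop_atTop

lemma tendsto_Ahat_mul_V_of_eq {t a i δ j : ℕ} (h : a + (δ - 1 - j) = i + t) :
    Tendsto (fun n => Ahat t n a * V n i δ j) atTop
      (𝓝 ((ell i δ j).choose (ell i δ j - j) * i ! / (a ! * (δ - 1 - j)!) : ℝ)) :=
  (isEquivalent_Ahat_mul_V (s := 0) h).tendsto_nhds_iff.mpr <| by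
    simpa only [pow_zero, div_one] using tendsto_const_nhds

lemma tendsto_natCast_sub_div (c : ℝ) : Tendsto (fun n : ℕ => ((n : ℝ) - c) / n) atTop (𝓝 1) := by
  have h := (tendsto_const_div_atTop_nhds_zero_nat c).const_sub 1
  rw [sub_zero] at h
  refine h.congr' ?_
  filter_upwards [eventually_ne_atTop 0] with n hn
  field_simp

lemma tendsto_pTerm {t i δ j : ℕ} (hδt : δ ≤ t) (hj : j < δ) (hi : δ ≤ i) :
    Tendsto (fun n => pTerm t n i δ j) atTop (𝓝 0) := by
  have hAV := tendsto_Ahat_mul_V_of_lt (t := t) (a := ell i δ j) (i := i) (δ := δ) (j := j)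
    (s := t - j) (by unfold ell; omega) (by omega)
  simpa only [pTerm, mul_assoc, mul_zero] using (tendsto_natCast_sub_div _).mul hAV

lemma mul_qTerm_eq (t n i δ j : ℕ) :
    ((n : ℝ) - 1) * qTerm t n i δ j =
      ((n : ℝ) - 1) / n * (ell i δ j + 1) * (Ahat t n (ell i δ j + 1) * V n i δ j) := by
  unfold qTerm
  ring

lemma tendsto_mul_qTerm_of_lt {t i δ j : ℕ} (hj : j < δ) (hjt : j + 1 < t) (hi : δ ≤ i) :
    Tendsto (fun n : ℕ => ((n : ℝ) - 1) * qTerm t n i δ j) atTop (𝓝 0) := by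
  have hAV := tendsto_Ahat_mul_V_of_lt (t := t) (a := ell i δ j + 1) (i := i) (δ := δ) (j := j)
    (s := t - (j + 1)) (by unfold ell; omega) (by omega)
  simpa only [mul_qTerm_eq, mul_zero] using
    ((tendsto_natCast_sub_div 1).mul_const ((ell i δ j : ℝ) + 1)).mul hAV

lemma tendsto_mul_qTerm_top {t i : ℕ} (ht : 1 ≤ t) (hi : t ≤ i) :
    Tendsto (fun n : ℕ => ((n : ℝ) - 1) * qTerm t n i t (t - 1)) atTop (𝓝 (1 / (t - 1)! : ℝ)) := by
  have hℓ : ell i t (t - 1) = i + (t - 1) := by unfold ell; omega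
  have hAV := tendsto_Ahat_mul_V_of_eq (t := t) (a := ell i t (t - 1) + 1) (δ := t)
    (j := t - 1) (i := i) (by omega)
  have hlim := ((tendsto_natCast_sub_div 1).mul_const ((ell i t (t - 1) : ℝ) + 1)).mul hAV
  simp only [← mul_qTerm_eq] at hlim
  convert hlim using 2
  -- with `ℓ = i + t - 1`: `(ℓ + 1) C(ℓ, i) i! / (ℓ + 1)! = 1 / (ℓ - i)!`
  have hfac := Nat.choose_mul_factorial_mul_factorial (Nat.le_add_right i (t - 1))
  rw [Nat.add_sub_cancel_left] at hfac
  rw [hℓ, Nat.add_sub_cancel, Nat.sub_self, Nat.factorial_zero, Nat.factorial_succ, ← hfac]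
  have hchoose : ((i + (t - 1)).choose i : ℝ) ≠ 0 := by
    exact_mod_cast (Nat.choose_pos (Nat.le_add_right i (t - 1))).ne'
  push_cast
  field_simp

lemma tendsto_Pn (t i : ℕ) :
    Tendsto (fun n => Pn t n i) atTop (𝓝 (if t ≤ i then 1 else 0)) := by
  split_ifs with hti
  · have hS : Tendsto (fun n => ∑ δ ∈ Icc 1 t, ∑ j ∈ range δ, pTerm t n i δ j) atTop (𝓝 0) := by
      simpa only [Finset.sum_const_zero] using tendsto_finsetSum _ fun δ hδ =>
        tendsto_finsetSum _ fun j hj => tendsto_pTerm (mem_Icc.mp hδ).2 (mem_range.mp hj)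
          ((mem_Icc.mp hδ).2.trans hti)
    refine (by simpa only [sub_zero] using hS.const_sub 1 : Tendsto _ _ (𝓝 (1 : ℝ))).congr' ?_
    filter_upwards [eventually_ge_atTop (i + t + 2)] with n hn
    rw [Pn_eq_one_sub_sum hti (by omega)]
  · simp only [Pn_eq_zero (not_le.mp hti), tendsto_const_nhds]

lemma tendsto_mul_Qn {t : ℕ} (ht : 1 ≤ t) (i : ℕ) :
    Tendsto (fun n : ℕ => ((n : ℝ) - 1) * Qn t n i) atTop
      (𝓝 (if t < i then 1 / (t - 1)! else 0)) := by
  split_ifs with hti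
  · have hterm : ∀ δ ∈ Icc 1 t, ∀ j ∈ range δ,
        Tendsto (fun n : ℕ => ((n : ℝ) - 1) * qTerm t n i δ j) atTop
          (𝓝 (if δ = t ∧ j = t - 1 then 1 / (t - 1)! else 0)) := by
      intro δ hδ j hj
      rw [mem_Icc] at hδ
      rw [mem_range] at hj
      split_ifs with htop
      · obtain ⟨rfl, rfl⟩ := htop
        exact tendsto_mul_qTerm_top ht hti.le
      · exact tendsto_mul_qTerm_of_lt hj (by omega) (by omega)
    have hval : ∑ δ ∈ Icc 1 t, ∑ j ∈ range δ,
        (if δ = t ∧ j = t - 1 then 1 / (t - 1)! else 0 : ℝ) = 1 / (t - 1)! := by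
      rw [Finset.sum_eq_single_of_mem t (right_mem_Icc.mpr ht) fun δ _ hδ => by simp [hδ]]
      simp [Finset.sum_ite_eq', Nat.one_le_iff_ne_zero.mp ht]
    refine (hval ▸ tendsto_finsetSum _ fun δ hδ => tendsto_finsetSum _ (hterm δ hδ)).congr' ?_
    filter_upwards [eventually_ge_atTop (i + t + 1)] with n hn
    simp only [Qn_eq_sum (n := n) hti (by omega), Finset.mul_sum]
  · simp only [Qn_eq_zero (not_lt.mp hti), mul_zero, tendsto_const_nhds]

lemma tendsto_Qn {t : ℕ} (ht : 1 ≤ t) (i : ℕ) : Tendsto (fun n => Qn t n i) atTop (𝓝 0) := by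
  have hinv : Tendsto (fun n : ℕ => ((n : ℝ) - 1)⁻¹) atTop (𝓝 0) :=
    (tendsto_atTop_add_const_right _ (-1) tendsto_natCast_atTop_atTop).inv_tendsto_atTop
  have hlim := hinv.mul (tendsto_mul_Qn ht i)
  rw [zero_mul] at hlim
  refine hlim.congr' ?_
  filter_upwards [eventually_ge_atTop 2] with n hn
  have : (n : ℝ) - 1 ≠ 0 := by
    have : (2 : ℝ) ≤ n := by exact_mod_cast hn
    linarith
  field_simp

noncomputable def binomialMass (m : ℕ) (x : ℝ) (i : ℕ) : ℝ :=
  m.choose i * x ^ i * (1 - x) ^ (m - i)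

lemma binomialMass_nonneg {m : ℕ} {x : ℝ} (hx0 : 0 ≤ x) (hx1 : x ≤ 1) (i : ℕ) :
    0 ≤ binomialMass m x i := by
  have := sub_nonneg.mpr hx1
  unfold binomialMass
  positivity

lemma binomialMass_le {m : ℕ} {x : ℝ} (hx0 : 0 ≤ x) (hx1 : x ≤ 1) (i : ℕ) :
    binomialMass m x i ≤ (m * x) ^ i / i ! := calc
  binomialMass m x i ≤ m.choose i * x ^ i * 1 := by
    unfold binomialMass
    gcongr
    exact pow_le_one₀ (sub_nonneg.mpr hx1) (by linarith)
  _ ≤ (m : ℝ) ^ i / i ! * x ^ i := by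
    rw [mul_one]
    gcongr
    exact Nat.choose_le_pow_div i m
  _ = (m * x) ^ i / i ! := by ring

lemma binomialMass_eq_zero {m i : ℕ} (x : ℝ) (h : m < i) : binomialMass m x i = 0 := by
  simp [binomialMass, Nat.choose_eq_zero_of_lt h]

lemma tendsto_binomialMass (lam : ℝ) (i : ℕ) :
    Tendsto (fun n : ℕ => binomialMass (n - 1) (lam / ((n : ℝ) - 1)) i) atTop
      (𝓝 (lam ^ i / i ! * Real.exp (-lam))) := by
  have hmul : Tendsto (fun m : ℕ => (m : ℝ) * (lam / m)) atTop (𝓝 lam) :=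
    tendsto_const_nhds.congr' <| by
      filter_upwards [eventually_ne_atTop 0] with m hm
      field_simp
  have hlim := (ProbabilityTheory.tendsto_choose_mul_pow_of_tendsto_mul_atTop i hmul).comp
    (tendsto_sub_atTop_nat 1)
  rw [show lam ^ i / (i ! : ℝ) * Real.exp (-lam) = Real.exp (-lam) * lam ^ i / (i ! : ℝ) by ring]
  refine hlim.congr' ?_
  filter_upwards [eventually_ge_atTop 1] with n hn
  simp only [Function.comp_apply, binomialMass, Nat.cast_sub hn, Nat.cast_one]

noncomputable def poissonTailTerm (lam : ℝ) (k i : ℕ) : ℝ :=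
  if k + 1 ≤ i then lam ^ i / (Nat.factorial i : ℝ) * Real.exp (-lam) else 0

noncomputable def scaledSummand (t : ℕ) (lam ρ : ℝ) (n i : ℕ) : ℝ :=
  binomialMass (n - 1) (lam / ((n : ℝ) - 1)) i * (ρ * Pn t n i + ((n : ℝ) - 1 - ρ) * Qn t n i)

lemma tendsto_scaledSummand {t : ℕ} (ht : 1 ≤ t) (lam ρ : ℝ) (i : ℕ) :
    Tendsto (fun n => scaledSummand t lam ρ n i) atTop
      (𝓝 (ρ * poissonTailTerm lam (t - 1) i + 1 / (t - 1)! * poissonTailTerm lam t i)) := by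
  have hlim := (tendsto_binomialMass lam i).mul (((tendsto_Pn t i).const_mul ρ).add
    ((tendsto_mul_Qn ht i).sub ((tendsto_Qn ht i).const_mul ρ)))
  convert hlim using 2
  · simp only [scaledSummand]
    ring
  · simp only [poissonTailTerm, Nat.sub_add_cancel ht, Nat.succ_le_iff]
    split_ifs <;> ring

noncomputable def majorant (t : ℕ) (lam : ℝ) (i : ℕ) : ℝ := (4 * lam) ^ i / (i - t)!

lemma summable_majorant (t : ℕ) (lam : ℝ) : Summable (majorant t lam) := by
  refine (summable_nat_add_iff t).mp ?_
  refine ((Real.summable_pow_div_factorial (4 * lam)).mul_left ((4 * lam) ^ t)).congr fun i => ?_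
  simp only [majorant, Nat.add_sub_cancel, pow_add]
  ring

lemma pow_div_factorial_le_majorant {t i l : ℕ} {lam c : ℝ} (hlam : 0 ≤ lam) (hc0 : 0 ≤ c)
    (hc : c ≤ 4) (hl : i - t ≤ l) : (c * lam) ^ i / l ! ≤ majorant t lam i := by
  unfold majorant
  gcongr

lemma two_pow_mul_pow_div_factorial_le {t i l : ℕ} {lam : ℝ} (hlam : 0 ≤ lam) (hl₁ : i - t ≤ l)
    (hl₂ : l ≤ i + t) : 2 ^ l * (2 * lam) ^ i / l ! ≤ 2 ^ t * majorant t lam i := calc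
  2 ^ l * (2 * lam) ^ i / l ! ≤ 2 ^ (t + i) * (2 * lam) ^ i / l ! := by
    gcongr
    · norm_num
    · omega
  _ = 2 ^ t * ((4 * lam) ^ i / l !) := by
    rw [pow_add, show (4 : ℝ) * lam = 2 * (2 * lam) by ring, mul_pow 2 (2 * lam)]
    ring
  _ ≤ 2 ^ t * majorant t lam i := by
    gcongr
    exact pow_div_factorial_le_majorant hlam (by norm_num) le_rfl hl₁

lemma sum_Icc_sum_range_le {t : ℕ} {f : ℕ → ℕ → ℝ} {B : ℝ} (hB : 0 ≤ B)
    (hf : ∀ δ ∈ Icc 1 t, ∀ j ∈ range δ, f δ j ≤ B) :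
    ∑ δ ∈ Icc 1 t, ∑ j ∈ range δ, f δ j ≤ t ^ 2 * B := calc
  ∑ δ ∈ Icc 1 t, ∑ j ∈ range δ, f δ j ≤ ∑ δ ∈ Icc 1 t, t * B := by
    refine Finset.sum_le_sum fun δ hδ => (Finset.sum_le_card_nsmul _ _ _ (hf δ hδ)).trans ?_
    rw [card_range, nsmul_eq_mul]
    gcongr
    exact_mod_cast (mem_Icc.mp hδ).2
  _ = t ^ 2 * B := by
    rw [Finset.sum_const, Nat.card_Icc, Nat.add_sub_cancel, nsmul_eq_mul]
    ring

lemma pTerm_nonneg {t n i δ j : ℕ} (h : ell i δ j ≤ n) : 0 ≤ pTerm t n i δ j := by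
  have : (ell i δ j : ℝ) ≤ n := by exact_mod_cast h
  have : 0 ≤ (n : ℝ) - ell i δ j := by linarith
  unfold pTerm Ahat V
  positivity

lemma Qn_nonneg (t n i : ℕ) : 0 ≤ Qn t n i := by
  unfold Qn Ahat V
  split_ifs <;> positivity

section Domination

variable {t n i : ℕ} {lam : ℝ}

lemma div_natCast_sub_one_mem_Icc (hlam : 0 ≤ lam) (hn : 2 ≤ n) (hlamn : lam ≤ n - 1) :
    lam / ((n : ℝ) - 1) ∈ Set.Icc 0 1 := by
  have : (2 : ℝ) ≤ n := by exact_mod_cast hn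
  exact ⟨div_nonneg hlam (by linarith), (div_le_one (by linarith)).mpr hlamn⟩

lemma binomialMass_scaled_nonneg (hlam : 0 ≤ lam) (hn : 2 ≤ n) (hlamn : lam ≤ n - 1) (i : ℕ) :
    0 ≤ binomialMass (n - 1) (lam / (n - 1)) i :=
  have hx := div_natCast_sub_one_mem_Icc hlam hn hlamn
  binomialMass_nonneg hx.1 hx.2 i

lemma binomialMass_scaled_le (hlam : 0 ≤ lam) (hn : 2 ≤ n) (hlamn : lam ≤ n - 1) (i : ℕ) :
    binomialMass (n - 1) (lam / (n - 1)) i ≤ lam ^ i / i ! := by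
  have hx := div_natCast_sub_one_mem_Icc hlam hn hlamn
  have hn1 : ((n - 1 : ℕ) : ℝ) = n - 1 := by rw [Nat.cast_sub (by omega), Nat.cast_one]
  have hn0 : (n : ℝ) - 1 ≠ 0 := by rw [← hn1]; exact_mod_cast (by omega : n - 1 ≠ 0)
  refine (binomialMass_le hx.1 hx.2 i).trans ?_
  rw [hn1, mul_div_cancel₀ _ hn0]

lemma binomialMass_mul_Ahat_mul_V_le {a δ j : ℕ} (hlam : 0 ≤ lam) (hn : 2 ≤ n)
    (hlamn : lam ≤ n - 1) (hin : i < n) (had : a + (δ - 1 - j) ≤ i + t) :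
    binomialMass (n - 1) (lam / (n - 1)) i * (Ahat t n a * V n i δ j) ≤
      2 ^ ell i δ j * (2 * lam) ^ i / a ! := by
  have hn2 : (2 : ℝ) ≤ n := by exact_mod_cast hn
  have hn1 : (0 : ℝ) < (n : ℝ) - 1 := by linarith
  obtain ⟨hx0, hx1⟩ := div_natCast_sub_one_mem_Icc hlam hn hlamn
  set x := lam / ((n : ℝ) - 1) with hx
  have hx2 : x ≤ 2 * lam / n := by
    rw [hx, div_le_div_iff₀ hn1 (by linarith)]
    nlinarith
  have hchoose : ((n - 1).choose i : ℝ) ≠ 0 := by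
    exact_mod_cast (Nat.choose_pos (by omega : i ≤ n - 1)).ne'
  calc binomialMass (n - 1) x i * (Ahat t n a * V n i δ j)
      = x ^ i * (1 - x) ^ (n - 1 - i) * (ell i δ j).choose (ell i δ j - j) *
          ((((n : ℝ) + 1) ^ t)⁻¹ * n.choose a * (n - ell i δ j - 1).choose (δ - 1 - j)) := by
        simp only [binomialMass, Ahat, V, zpow_neg, zpow_natCast]
        field_simp
    _ ≤ (2 * lam / n) ^ i * 1 * 2 ^ ell i δ j *
          (((n : ℝ) ^ t)⁻¹ * (n ^ a / a !) * n ^ (δ - 1 - j)) := by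
        gcongr
        · exact pow_le_one₀ (sub_nonneg.mpr hx1) (by linarith)
        · exact_mod_cast Nat.choose_le_two_pow _ _
        · linarith
        · exact Nat.choose_le_pow_div a n
        · exact_mod_cast (Nat.choose_le_pow _ _).trans (Nat.pow_le_pow_left (by omega) _)
    _ = 2 ^ ell i δ j * (2 * lam) ^ i / a ! * ((n : ℝ) ^ (a + (δ - 1 - j)) / n ^ (i + t)) := by
        have : (n : ℝ) ≠ 0 := by positivity
        rw [div_pow]
        field_simp
        ring
    _ ≤ 2 ^ ell i δ j * (2 * lam) ^ i / a ! * 1 := by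
        gcongr
        exact div_le_one_of_le₀ (pow_le_pow_right₀ (by linarith) had) (by positivity)
    _ = 2 ^ ell i δ j * (2 * lam) ^ i / a ! := mul_one _

lemma binomialMass_mul_pTerm_le (hlam : 0 ≤ lam) (hn : 2 ≤ n) (hlamn : lam ≤ n - 1)
    (hti : t ≤ i) (hin : i < n) {δ j : ℕ} (hδ : δ ∈ Icc 1 t) (hj : j ∈ range δ) :
    binomialMass (n - 1) (lam / (n - 1)) i * pTerm t n i δ j ≤ 2 ^ t * majorant t lam i := by
  rw [mem_Icc] at hδ
  rw [mem_range] at hj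
  have hn1 : (1 : ℝ) ≤ n - 1 := by
    have : (2 : ℝ) ≤ n := by exact_mod_cast hn
    linarith
  have hAV : 0 ≤ Ahat t n (ell i δ j) * V n i δ j := by unfold Ahat V; positivity
  have hcoef : ((n : ℝ) - ell i δ j) / n ≤ 1 := div_le_one_of_le₀ (by linarith) (by positivity)
  calc binomialMass (n - 1) (lam / (n - 1)) i * pTerm t n i δ j
      ≤ binomialMass (n - 1) (lam / (n - 1)) i * (Ahat t n (ell i δ j) * V n i δ j) := by
        refine mul_le_mul_of_nonneg_left ?_ (binomialMass_scaled_nonneg hlam hn hlamn i)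
        rw [pTerm, mul_assoc]
        exact mul_le_of_le_one_left hAV hcoef
    _ ≤ 2 ^ ell i δ j * (2 * lam) ^ i / (ell i δ j)! :=
        binomialMass_mul_Ahat_mul_V_le hlam hn hlamn hin (by unfold ell; omega)
    _ ≤ 2 ^ t * majorant t lam i :=
        two_pow_mul_pow_div_factorial_le hlam (by unfold ell; omega) (by unfold ell; omega)

lemma binomialMass_mul_mul_qTerm_le (hlam : 0 ≤ lam) (hn : 2 ≤ n) (hlamn : lam ≤ n - 1)
    (hti : t ≤ i) (hin : i < n) {δ j : ℕ} (hδ : δ ∈ Icc 1 t) (hj : j ∈ range δ) :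
    binomialMass (n - 1) (lam / (n - 1)) i * (((n : ℝ) - 1) * qTerm t n i δ j) ≤
      2 ^ t * majorant t lam i := by
  rw [mem_Icc] at hδ
  rw [mem_range] at hj
  have hn1 : (1 : ℝ) ≤ n - 1 := by
    have : (2 : ℝ) ≤ n := by exact_mod_cast hn
    linarith
  have hAV : 0 ≤ Ahat t n (ell i δ j + 1) * V n i δ j := by unfold Ahat V; positivity
  have hcoef : ((n : ℝ) - 1) / n ≤ 1 := div_le_one_of_le₀ (by linarith) (by positivity)
  calc binomialMass (n - 1) (lam / (n - 1)) i * (((n : ℝ) - 1) * qTerm t n i δ j)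
      ≤ (ell i δ j + 1) * (binomialMass (n - 1) (lam / (n - 1)) i *
          (Ahat t n (ell i δ j + 1) * V n i δ j)) := by
        rw [mul_qTerm_eq, mul_left_comm]
        exact mul_le_mul_of_nonneg_right (mul_le_of_le_one_left (by positivity) hcoef)
          (mul_nonneg (binomialMass_scaled_nonneg hlam hn hlamn i) hAV)
    _ ≤ (ell i δ j + 1) * (2 ^ ell i δ j * (2 * lam) ^ i / (ell i δ j + 1)!) := by
        gcongr
        exact binomialMass_mul_Ahat_mul_V_le hlam hn hlamn hin (by unfold ell; omega)
    _ = 2 ^ ell i δ j * (2 * lam) ^ i / (ell i δ j)! := by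
        rw [Nat.factorial_succ]
        push_cast
        field_simp
    _ ≤ 2 ^ t * majorant t lam i :=
        two_pow_mul_pow_div_factorial_le hlam (by unfold ell; omega) (by unfold ell; omega)

lemma binomialMass_mul_abs_Pn_le (hlam : 0 ≤ lam) (hn : 2 ≤ n) (hlamn : lam ≤ n - 1)
    (hin : i < n) :
    binomialMass (n - 1) (lam / (n - 1)) i * |Pn t n i| ≤
      (t ^ 2 + 1) * 2 ^ t * majorant t lam i := by
  have hB := binomialMass_scaled_nonneg hlam hn hlamn i
  have hBM : binomialMass (n - 1) (lam / (n - 1)) i ≤ majorant t lam i := by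
    refine (binomialMass_scaled_le hlam hn hlamn i).trans ?_
    simpa only [one_mul] using
      pow_div_factorial_le_majorant (c := 1) hlam zero_le_one (by norm_num) (Nat.sub_le i t)
  set B := binomialMass (n - 1) (lam / (n - 1)) i
  have hM : 0 ≤ majorant t lam i := hB.trans hBM
  have hM' : 0 ≤ (t : ℝ) ^ 2 * (2 ^ t * majorant t lam i) := by positivity
  have h2t : (1 : ℝ) ≤ 2 ^ t := one_le_pow₀ one_le_two
  rcases lt_or_ge i t with hti | hti
  · rw [Pn_eq_zero hti, abs_zero, mul_zero]
    positivity
  rcases le_or_gt i (n - t - 2) with hmid | htop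
  · rw [Pn_eq_one_sub_sum hti hmid]
    set S := ∑ δ ∈ Icc 1 t, ∑ j ∈ range δ, pTerm t n i δ j with hS_def
    have hS : 0 ≤ S := sum_nonneg fun δ hδ => sum_nonneg fun j hj => pTerm_nonneg <| by
      rw [mem_Icc] at hδ
      rw [mem_range] at hj
      unfold ell
      omega
    have hBS : B * S ≤ t ^ 2 * (2 ^ t * majorant t lam i) := by
      simp only [hS_def, Finset.mul_sum]
      exact sum_Icc_sum_range_le (by positivity) fun δ hδ j hj =>
        binomialMass_mul_pTerm_le hlam hn hlamn hti hin hδ hj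
    calc B * |1 - S| ≤ B * (1 + S) := by
          gcongr
          exact abs_le.mpr ⟨by linarith, by linarith⟩
      _ = B + B * S := by ring
      _ ≤ majorant t lam i + t ^ 2 * (2 ^ t * majorant t lam i) := add_le_add hBM hBS
      _ ≤ (t ^ 2 + 1) * 2 ^ t * majorant t lam i := by nlinarith
  · rw [Pn_eq_one hti htop, abs_one, mul_one]
    nlinarith

lemma binomialMass_mul_mul_Qn_le (hlam : 0 ≤ lam) (hn : 2 ≤ n) (hlamn : lam ≤ n - 1)
    (hin : i < n) :
    binomialMass (n - 1) (lam / (n - 1)) i * (((n : ℝ) - 1) * Qn t n i) ≤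
      (t ^ 2 + 1) * 2 ^ t * majorant t lam i := by
  have hB := binomialMass_scaled_nonneg hlam hn hlamn i
  have hBl := binomialMass_scaled_le hlam hn hlamn i
  set B := binomialMass (n - 1) (lam / (n - 1)) i
  have hM : 0 ≤ 2 ^ t * majorant t lam i := by unfold majorant; positivity
  have hM' : 0 ≤ (t : ℝ) ^ 2 * (2 ^ t * majorant t lam i) := by positivity
  rcases le_or_gt i t with hti | hti
  · rw [Qn_eq_zero hti, mul_zero, mul_zero]
    nlinarith
  rcases le_or_gt i (n - t - 1) with hmid | htop
  · rw [Qn_eq_sum hti hmid]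
    calc B * (((n : ℝ) - 1) * ∑ δ ∈ Icc 1 t, ∑ j ∈ range δ, qTerm t n i δ j)
        = ∑ δ ∈ Icc 1 t, ∑ j ∈ range δ, B * (((n : ℝ) - 1) * qTerm t n i δ j) := by
          simp only [Finset.mul_sum]
      _ ≤ t ^ 2 * (2 ^ t * majorant t lam i) :=
          sum_Icc_sum_range_le (by positivity) fun δ hδ j hj =>
            binomialMass_mul_mul_qTerm_le hlam hn hlamn hti.le hin hδ hj
      _ ≤ (t ^ 2 + 1) * 2 ^ t * majorant t lam i := by nlinarith
  · rw [Qn_eq_one hti htop, mul_one]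
    have hn1 : (n : ℝ) - 1 ≤ 2 ^ (i + t) := by
      have : (n : ℝ) ≤ (i + t : ℕ) := by exact_mod_cast (by omega : n ≤ i + t)
      have : ((i + t : ℕ) : ℝ) < 2 ^ (i + t) := by exact_mod_cast Nat.lt_two_pow_self
      linarith
    calc B * ((n : ℝ) - 1) ≤ lam ^ i / i ! * 2 ^ (i + t) :=
          mul_le_mul hBl hn1 (by linarith) (by positivity)
      _ = 2 ^ t * ((2 * lam) ^ i / i !) := by ring
      _ ≤ 2 ^ t * majorant t lam i := by
          gcongr
          exact pow_div_factorial_le_majorant hlam zero_le_two (by norm_num) (Nat.sub_le i t)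
      _ ≤ (t ^ 2 + 1) * 2 ^ t * majorant t lam i := by nlinarith

lemma abs_scaledSummand_le {ρ : ℝ} (hlam : 0 ≤ lam) (hρ : 0 ≤ ρ) (hn : 2 ≤ n)
    (hlamn : lam ≤ n - 1) (hρn : ρ ≤ n - 1) (i : ℕ) :
    |scaledSummand t lam ρ n i| ≤ (ρ + 1) * ((t ^ 2 + 1) * 2 ^ t * majorant t lam i) := by
  have hK : 0 ≤ (t ^ 2 + 1) * 2 ^ t * majorant t lam i := by unfold majorant; positivity
  rcases lt_or_ge i n with hin | hin
  · have hB := binomialMass_scaled_nonneg hlam hn hlamn i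
    have hP := binomialMass_mul_abs_Pn_le (t := t) hlam hn hlamn hin
    have hQ := binomialMass_mul_mul_Qn_le (t := t) hlam hn hlamn hin
    have hQ0 := Qn_nonneg t n i
    set B := binomialMass (n - 1) (lam / (n - 1)) i
    calc |scaledSummand t lam ρ n i| ≤ B * (ρ * |Pn t n i| + (n - 1) * Qn t n i) := by
          rw [scaledSummand, abs_mul, abs_of_nonneg hB]
          gcongr
          refine (abs_add_le _ _).trans ?_
          rw [abs_mul, abs_mul, abs_of_nonneg hρ, abs_of_nonneg hQ0]
          gcongr
          exact abs_le.mpr ⟨by linarith, by linarith⟩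
      _ = ρ * (B * |Pn t n i|) + B * (((n : ℝ) - 1) * Qn t n i) := by ring
      _ ≤ (ρ + 1) * ((t ^ 2 + 1) * 2 ^ t * majorant t lam i) := by nlinarith
  · rw [scaledSummand, binomialMass_eq_zero _ (by omega), zero_mul, abs_zero]
    positivity

end Domination

lemma mul_fDE_eq_tsum_scaledSummand (t : ℕ) (lam ρ : ℝ) {n : ℕ} (hn : 2 ≤ n) :
    ((n : ℝ) - 1) * fDE t n (lam / ((n : ℝ) - 1)) (ρ / ((n : ℝ) - 1)) =
      ∑' i, scaledSummand t lam ρ n i := by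
  have hn1 : (n : ℝ) - 1 ≠ 0 := by
    have : (2 : ℝ) ≤ n := by exact_mod_cast hn
    linarith
  rw [tsum_eq_sum (s := range n) fun i hi => by
    rw [scaledSummand, binomialMass_eq_zero _ (by rw [mem_range] at hi; omega), zero_mul]]
  rw [fDE, Finset.mul_sum]
  refine sum_congr rfl fun i _ => ?_
  simp only [scaledSummand, binomialMass]
  field_simp

lemma summable_poissonTailTerm (lam : ℝ) (k : ℕ) : Summable (poissonTailTerm lam k) :=
  (((Real.summable_pow_div_factorial lam).mul_right (Real.exp (-lam))).indicator
    {i | k + 1 ≤ i}).congr fun i => by simp [poissonTailTerm, Set.indicator_apply]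

lemma tsum_add_poissonTailTerm (lam a b : ℝ) (k l : ℕ) :
    ∑' i, (a * poissonTailTerm lam k i + b * poissonTailTerm lam l i) =
      a * phi lam k + b * phi lam l := by
  rw [Summable.tsum_add ((summable_poissonTailTerm lam k).mul_left a)
    ((summable_poissonTailTerm lam l).mul_left b), tsum_mul_left, tsum_mul_left]
  rfl

/-- for `t ≥ 2`, `λ, ρ ≥ 0`,
`lim_{n→∞} (n−1)·f_n(λ/(n−1); ρ/(n−1)) = ρ·φ(λ;t−1) + (1/(t−1)!)·φ(λ;t)`. -/
theorem stmt5 (t : ℕ) (ht : 2 ≤ t) (lam ρ : ℝ) (hlam : 0 ≤ lam) (hρ : 0 ≤ ρ) :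
    Tendsto (fun n : ℕ =>
        ((n : ℝ) - 1) * fDE t n (lam / ((n : ℝ) - 1)) (ρ / ((n : ℝ) - 1)))
      atTop
      (nhds (ρ * phi lam (t - 1) + (1 / (Nat.factorial (t - 1) : ℝ)) * phi lam t)) := by
  have hbound : ∀ᶠ n : ℕ in atTop, ∀ i, ‖scaledSummand t lam ρ n i‖ ≤
      (ρ + 1) * ((t ^ 2 + 1) * 2 ^ t * majorant t lam i) := by
    filter_upwards [eventually_ge_atTop 2,
      tendsto_natCast_atTop_atTop.eventually_ge_atTop (lam + 1),
      tendsto_natCast_atTop_atTop.eventually_ge_atTop (ρ + 1)] with n hn hlamn hρn i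
    exact abs_scaledSummand_le hlam hρ hn (by linarith) (by linarith) i
  have hlim := tendsto_tsum_of_dominated_convergence
    (((summable_majorant t lam).mul_left _).mul_left _) (tendsto_scaledSummand (by omega) lam ρ)
    hbound
  rw [tsum_add_poissonTailTerm] at hlim
  refine hlim.congr' ?_
  filter_upwards [eventually_ge_atTop 2] with n hn
  exact (mul_fDE_eq_tsum_scaledSummand t lam ρ hn).symm
end

section
/- For every integer t ≥ 2 and every real λ ≥ 0, the potential function at ρ = 2t−2 is nonnegative: ∫_0^λ (z − (2t−2)·φ(z;t−1)) dz ≥ 0. -/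
open Filter

/-- Potential function of the high-rate scaling limit of density evolution for
iterative hard-decision decoding without miscorrection:
`U(λ;ρ) = ∫_0^λ (z − ρ·φ(z;t−1)) dz`. -/
noncomputable def U (t : ℕ) (lam ρ : ℝ) : ℝ :=
  ∫ z in (0 : ℝ)..lam, (z - ρ * phi z (t - 1))

/-!
Put `k = t - 1` and let `X ∼ Poisson(z)`. Since `φ(z;k) = P(X > k)`, integrating in `z` gives
`∫_0^λ φ(z;k) dz = 𝔼[(X - (k+1))⁺]` with `X ∼ Poisson(λ)`, so `U(λ; 2k) = λ²/2 - 2k·𝔼[(X - (k+1))⁺]`.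
For every integer `n`, `4k·(n - (k+1)) ≤ n(n-1)`: the quadratic `n² - (4k+1)n + 4k(k+1)` has
discriminant `1 - 8k < 0`. Taking expectations and using the factorial moment `𝔼[X(X-1)] = λ²`
yields `𝔼[(X - (k+1))⁺] ≤ λ²/(4k)`, i.e. `U ≥ 0`.
-/

open Finset Real Nat

theorem hasSum_pow_div_factorial (x : ℝ) : HasSum (fun n : ℕ => x ^ n / n !) (exp x) :=
  exp_eq_exp_ℝ ▸ NormedSpace.expSeries_div_hasSum_exp x

theorem hasSum_descFactorial_mul_pow_div_factorial (m : ℕ) (x : ℝ) :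
    HasSum (fun n : ℕ => (n.descFactorial m : ℝ) * x ^ n / n !) (x ^ m * exp x) := by
  rw [← hasSum_nat_add_iff' m]
  have hlow : ∑ n ∈ range m, (n.descFactorial m : ℝ) * x ^ n / n ! = 0 :=
    sum_eq_zero fun n hn => by
      rw [descFactorial_of_lt (mem_range.mp hn), cast_zero, zero_mul, zero_div]
  have hshift (n : ℕ) :
      ((n + m).descFactorial m : ℝ) * x ^ (n + m) / (n + m)! = x ^ m * (x ^ n / n !) := by
    rw [← factorial_mul_ascFactorial, ← add_descFactorial_eq_ascFactorial]
    push_cast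
    field_simp
    ring
  simpa only [hlow, sub_zero, hshift] using (hasSum_pow_div_factorial x).mul_left (x ^ m)

theorem phi_eq_one_sub_exp_mul_sum (z : ℝ) (k : ℕ) :
    phi z k = 1 - exp (-z) * ∑ j ∈ range (k + 1), z ^ j / j ! := by
  have hone : HasSum (fun n : ℕ => z ^ n / n ! * exp (-z)) 1 := by
    simpa [← exp_add] using (hasSum_pow_div_factorial z).mul_right (exp (-z))
  have htail := (hasSum_nat_add_iff' (k + 1)).mpr hone
  rw [← sum_mul, mul_comm] at htail
  refine ((hasSum_nat_add_iff' (k + 1)).mp ?_).tsum_eq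
  have hlow : ∑ i ∈ range (k + 1), (if k + 1 ≤ i then z ^ i / i ! * exp (-z) else 0) = 0 :=
    sum_eq_zero fun i hi => if_neg (by simpa using hi)
  simpa only [hlow, sub_zero, le_add_self, if_true] using htail

theorem continuous_phi (k : ℕ) : Continuous fun z => phi z k := by
  simp_rw [phi_eq_one_sub_exp_mul_sum]
  fun_prop

theorem hasDerivAt_sum_mul_pow_div_factorial (a : ℕ → ℝ) (k : ℕ) (x : ℝ) :
    HasDerivAt (fun y => ∑ j ∈ range (k + 1), a j * y ^ j / j !)
      (∑ j ∈ range k, a (j + 1) * x ^ j / j !) x := by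
  have hterm (j : ℕ) :
      HasDerivAt (fun y => a j * y ^ j / j !) (a j * (j * x ^ (j - 1)) / j !) x :=
    ((hasDerivAt_pow j x).const_mul (a j)).div_const _
  refine (HasDerivAt.fun_sum fun j _ => hterm j).congr_deriv ?_
  rw [sum_range_succ']
  simp only [cast_zero, zero_mul, mul_zero, zero_div, add_zero]
  refine sum_congr rfl fun j _ => ?_
  rw [factorial_succ]
  push_cast
  field_simp

/-- For `X ∼ Poisson(x)`, the expected excess `𝔼[(X - (k+1))⁺]`, written through
`(X - (k+1))⁺ = X - (k+1) + (k+1-X)⁺`; the truncated subtraction `k + 1 - j` in `ℕ` is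
exactly the positive part. -/
noncomputable def poissonExcess (k : ℕ) (x : ℝ) : ℝ :=
  x - (k + 1) + exp (-x) * ∑ j ∈ range (k + 1), ((k + 1 - j : ℕ) : ℝ) * x ^ j / j !

theorem poissonExcess_zero (k : ℕ) : poissonExcess k 0 = 0 := by
  simp [poissonExcess, sum_range_succ', pow_succ]

theorem hasDerivAt_poissonExcess (k : ℕ) (x : ℝ) :
    HasDerivAt (poissonExcess k) (phi x k) x := by
  have hsum := hasDerivAt_sum_mul_pow_div_factorial (fun j => ((k + 1 - j : ℕ) : ℝ)) k x
  have hexp : HasDerivAt (fun y => exp (-y)) (-exp (-x)) x := by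
    simpa using (hasDerivAt_neg x).exp
  refine (((hasDerivAt_id x).sub_const ((k : ℝ) + 1)).add (hexp.mul hsum)).congr_deriv ?_
  have hdiff : ∑ j ∈ range (k + 1), x ^ j / j ! =
      (∑ j ∈ range (k + 1), ((k + 1 - j : ℕ) : ℝ) * x ^ j / j !) -
        ∑ j ∈ range k, ((k + 1 - (j + 1) : ℕ) : ℝ) * x ^ j / j ! := by
    rw [sum_range_succ, sum_range_succ _ k, add_sub_right_comm, ← sum_sub_distrib]
    congr 1
    · refine sum_congr rfl fun j hj => ?_
      rw [Nat.cast_sub (by simp at hj; omega), Nat.cast_sub (by simp at hj; omega)]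
      push_cast
      ring
    · simp
  rw [phi_eq_one_sub_exp_mul_sum, hdiff]
  ring

theorem integral_phi (k : ℕ) (lam : ℝ) :
    ∫ z in (0 : ℝ)..lam, phi z k = poissonExcess k lam := by
  rw [intervalIntegral.integral_eq_sub_of_hasDerivAt
      (fun x _ => hasDerivAt_poissonExcess k x) ((continuous_phi k).intervalIntegrable _ _),
    poissonExcess_zero, sub_zero]

theorem U_eq (t : ℕ) (lam ρ : ℝ) : U t lam ρ = lam ^ 2 / 2 - ρ * poissonExcess (t - 1) lam := by
  rw [U, intervalIntegral.integral_sub intervalIntegral.intervalIntegrable_id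
      (((continuous_phi _).const_mul ρ).intervalIntegrable _ _),
    intervalIntegral.integral_const_mul, integral_id, integral_phi]
  ring

theorem hasSum_poissonExcess (k : ℕ) (x : ℝ) :
    HasSum (fun n : ℕ => ((n - (k + 1) : ℕ) : ℝ) * x ^ n / n !) (exp x * poissonExcess k x) := by
  have hmean : HasSum (fun n : ℕ => (n : ℝ) * x ^ n / n !) (x * exp x) := by
    simpa using hasSum_descFactorial_mul_pow_div_factorial 1 x
  have hfin : HasSum (fun n : ℕ => ((k + 1 - n : ℕ) : ℝ) * x ^ n / n !)
      (∑ j ∈ range (k + 1), ((k + 1 - j : ℕ) : ℝ) * x ^ j / j !) :=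
    hasSum_sum_of_ne_finset_zero fun n hn => by
      rw [Nat.sub_eq_zero_of_le (by simpa using hn), cast_zero, zero_mul, zero_div]
  have hvalue : exp x * poissonExcess k x = x * exp x - (k + 1) * exp x +
      ∑ j ∈ range (k + 1), ((k + 1 - j : ℕ) : ℝ) * x ^ j / j ! := by
    rw [poissonExcess, mul_add, ← mul_assoc, ← exp_add, add_neg_cancel, exp_zero, one_mul]
    ring
  rw [hvalue]
  refine ((hmean.sub ((hasSum_pow_div_factorial x).mul_left ((k : ℝ) + 1))).add hfin).congr_fun
    fun n => ?_
  rcases le_total n (k + 1) with hn | hn <;>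
    · rw [Nat.sub_eq_zero_of_le hn, Nat.cast_sub hn]
      push_cast
      ring

theorem cast_tsub_le_descFactorial_two_div {k : ℕ} (hk : 0 < k) (n : ℕ) :
    ((n - (k + 1) : ℕ) : ℝ) ≤ n.descFactorial 2 / (4 * k) := by
  rcases le_total n (k + 1) with hn | hn
  · rw [Nat.sub_eq_zero_of_le hn, cast_zero]
    positivity
  have hk' : (1 : ℝ) ≤ k := by exact_mod_cast hk
  rw [le_div_iff₀ (by positivity), Nat.cast_sub hn, cast_descFactorial_two]
  push_cast
  nlinarith [sq_nonneg (2 * (n : ℝ) - 4 * k - 1)]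

theorem poissonExcess_le {k : ℕ} (hk : 0 < k) {x : ℝ} (hx : 0 ≤ x) :
    poissonExcess k x ≤ x ^ 2 / (4 * k) := by
  have hle := hasSum_le (fun n => ?_) (hasSum_poissonExcess k x)
    ((hasSum_descFactorial_mul_pow_div_factorial 2 x).div_const (4 * k))
  · rwa [mul_div_right_comm, mul_comm, mul_le_mul_iff_of_pos_right (exp_pos x)] at hle
  · convert mul_le_mul_of_nonneg_right (cast_tsub_le_descFactorial_two_div hk n)
      (by positivity : 0 ≤ x ^ n / n !) using 1 <;> ring

/-- for every integer `t ≥ 2` and every `λ ≥ 0`, the potential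
function at `ρ = 2t−2` is nonnegative: `∫_0^λ (z − (2t−2)·φ(z;t−1)) dz ≥ 0`. -/
theorem stmt8 (t : ℕ) (ht : 2 ≤ t) (lam : ℝ) (hlam : 0 ≤ lam) :
    0 ≤ U t lam (2 * (t : ℝ) - 2) := by
  obtain ⟨k, rfl⟩ : ∃ k, t = k + 1 := ⟨t - 1, by omega⟩
  have hk : 0 < k := by omega
  rw [U_eq, Nat.add_sub_cancel, sub_nonneg]
  calc (2 * ((k + 1 : ℕ) : ℝ) - 2) * poissonExcess k lam
      = 2 * k * poissonExcess k lam := by push_cast; ring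
    _ ≤ 2 * k * (lam ^ 2 / (4 * k)) := by gcongr; exact poissonExcess_le hk hlam
    _ = lam ^ 2 / 2 := by field_simp; ring
end

section
/- For every real ε > 0 there exist an integer t ≥ 2 and an integer V ≥ 1 such that for every integer ν ≥ V, setting n = 2^ν − 1, p = (2t − 2 − 1/(t−1)!)/n, and R = 1 − 2νt/n, one has 0 < p < 1/2, 0 < R < 1, and (1 − C(p))/(1 − R) ≥ 1 − ε. -/
/-!
Write `a = 2t − 2 − 1/(t−1)!` and `n = 2^ν − 1`, so `p = a/n` and `1 − R = 2νt/n`. Dropping the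
nonnegative term `−(1−p) log₂(1−p)` of the entropy and using `log₂ n ≥ ν − 1` gives
`H(p) ≥ (a/n)(ν − 1 − log₂ a)`, hence `(1 − C(p))/(1 − R) ≥ (a/(2t))(1 − (1 + log₂ a)/ν)`,
which tends to `a/(2t) ≥ 1 − 3/(2t)` as `ν → ∞`. Choosing `t` large first and then `ν` large
makes the ratio exceed `1 − ε`, while `p` and `1 − R` tend to `0`.
-/

open Filter

/-- Binary entropy function `H(p) = −p·log₂ p − (1−p)·log₂(1−p)`. -/
noncomputable def H (p : ℝ) : ℝ :=
  -p * Real.logb 2 p - (1 - p) * Real.logb 2 (1 - p)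

/-- Capacity of the binary symmetric channel with crossover probability `p`. -/
noncomputable def C (p : ℝ) : ℝ := 1 - H p

open Real Topology

lemma one_sub_C (p : ℝ) : 1 - C p = H p := sub_sub_cancel 1 (H p)

lemma neg_mul_logb_le_H {p : ℝ} (h0 : 0 ≤ p) (h1 : p ≤ 1) : -p * logb 2 p ≤ H p := by
  have : logb 2 (1 - p) ≤ 0 := logb_nonpos one_lt_two (by linarith) (by linarith)
  unfold H
  nlinarith

lemma natCast_sub_one_le_logb_two_pow_sub_one {ν : ℕ} (hν : 1 ≤ ν) :
    (ν : ℝ) - 1 ≤ logb 2 (2 ^ ν - 1) := by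
  have h2ν : (2 : ℝ) ≤ 2 ^ ν := le_self_pow₀ one_le_two (by omega)
  rw [le_logb_iff_rpow_le one_lt_two (by linarith), rpow_sub two_pos, rpow_one, rpow_natCast]
  linarith

lemma mul_sub_logb_le_H_div {a : ℝ} {ν : ℕ} (ha : 0 < a) (hν : 1 ≤ ν) (han : a ≤ 2 ^ ν - 1) :
    a / (2 ^ ν - 1) * (ν - 1 - logb 2 a) ≤ H (a / (2 ^ ν - 1)) := by
  have hn : (0 : ℝ) < 2 ^ ν - 1 := ha.trans_le han
  calc a / (2 ^ ν - 1) * (ν - 1 - logb 2 a)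
      ≤ a / (2 ^ ν - 1) * (logb 2 (2 ^ ν - 1) - logb 2 a) := by
        gcongr
        exact natCast_sub_one_le_logb_two_pow_sub_one hν
    _ = -(a / (2 ^ ν - 1)) * logb 2 (a / (2 ^ ν - 1)) := by
        rw [logb_div ha.ne' hn.ne']; ring
    _ ≤ H (a / (2 ^ ν - 1)) :=
        neg_mul_logb_le_H (by positivity) ((div_le_one hn).2 han)

lemma tendsto_two_pow_sub_one_atTop : Tendsto (fun ν : ℕ ↦ (2 : ℝ) ^ ν - 1) atTop atTop :=
  tendsto_atTop_add_const_right _ _ (tendsto_pow_atTop_atTop_of_one_lt one_lt_two)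

lemma tendsto_natCast_div_two_pow_sub_one :
    Tendsto (fun ν : ℕ ↦ (ν : ℝ) / (2 ^ ν - 1)) atTop (𝓝 0) := by
  have hlim : Tendsto (fun ν : ℕ ↦ 2 * ((ν : ℝ) ^ 1 / 2 ^ ν)) atTop (𝓝 0) := by
    simpa using (tendsto_pow_const_div_const_pow_of_one_lt 1 one_lt_two).const_mul 2
  refine tendsto_of_tendsto_of_tendsto_of_le_of_le' tendsto_const_nhds hlim ?_ ?_
  · filter_upwards [tendsto_two_pow_sub_one_atTop.eventually_ge_atTop 0] with ν hn
    exact div_nonneg ν.cast_nonneg hn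
  · filter_upwards [eventually_ge_atTop 1] with ν hν
    have : (2 : ℝ) ≤ 2 ^ ν := le_self_pow₀ one_le_two (by omega)
    rw [pow_one, div_le_iff₀ (by linarith)]
    field_simp
    nlinarith [ν.cast_nonneg (α := ℝ)]

lemma eventually_div_two_pow_sub_one_mem {a : ℝ} (ha : 0 < a) :
    ∀ᶠ ν : ℕ in atTop, 0 < a / (2 ^ ν - 1) ∧ a / (2 ^ ν - 1) < 1 / 2 := by
  have hlim : Tendsto (fun ν : ℕ ↦ a / (2 ^ ν - 1)) atTop (𝓝 0) :=
    tendsto_const_nhds.div_atTop tendsto_two_pow_sub_one_atTop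
  filter_upwards [tendsto_two_pow_sub_one_atTop.eventually_gt_atTop 0,
    hlim.eventually_lt_const one_half_pos] with ν hn hlt
  exact ⟨div_pos ha hn, hlt⟩

lemma eventually_one_sub_mul_div_two_pow_sub_one_mem {t : ℝ} (ht : 0 < t) :
    ∀ᶠ ν : ℕ in atTop,
      0 < 1 - 2 * ν * t / (2 ^ ν - 1) ∧ 1 - 2 * ν * t / (2 ^ ν - 1) < 1 := by
  have hlim : Tendsto (fun ν : ℕ ↦ 2 * ν * t / (2 ^ ν - 1)) atTop (𝓝 0) := by
    have := tendsto_natCast_div_two_pow_sub_one.const_mul (2 * t)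
    rw [mul_zero] at this
    exact this.congr fun ν ↦ by ring
  filter_upwards [tendsto_two_pow_sub_one_atTop.eventually_gt_atTop 0,
    hlim.eventually_lt_const one_pos, eventually_gt_atTop 0] with ν hn hlt hν
  have : 0 < 2 * ν * t / (2 ^ ν - 1) := by positivity
  constructor <;> linarith

lemma mul_one_sub_div_le_H_div {a t : ℝ} {ν : ℕ} (ha : 0 < a) (ht : 0 < t) (hν : 1 ≤ ν)
    (han : a ≤ 2 ^ ν - 1) :
    a / (2 * t) * (1 - (1 + logb 2 a) / ν) ≤
      H (a / (2 ^ ν - 1)) / (2 * ν * t / (2 ^ ν - 1)) := by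
  have hn : (0 : ℝ) < 2 ^ ν - 1 := ha.trans_le han
  have hν0 : (0 : ℝ) < ν := by exact_mod_cast hν
  calc a / (2 * t) * (1 - (1 + logb 2 a) / ν)
      = a / (2 ^ ν - 1) * (ν - 1 - logb 2 a) / (2 * ν * t / (2 ^ ν - 1)) := by
        field_simp; ring
    _ ≤ H (a / (2 ^ ν - 1)) / (2 * ν * t / (2 ^ ν - 1)) := by
        gcongr
        exact mul_sub_logb_le_H_div ha hν han

lemma eventually_one_sub_le_redundancy {ε a t : ℝ} (ha : 0 < a) (ht : 0 < t)
    (hεa : 1 - ε < a / (2 * t)) :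
    ∀ᶠ ν : ℕ in atTop,
      1 - ε ≤ (1 - C (a / (2 ^ ν - 1))) / (1 - (1 - 2 * ν * t / (2 ^ ν - 1))) := by
  have hlim : Tendsto (fun ν : ℕ ↦ a / (2 * t) * (1 - (1 + logb 2 a) / ν)) atTop
      (𝓝 (a / (2 * t))) := by
    simpa using (tendsto_const_nhds (x := a / (2 * t))).mul
      ((tendsto_const_nhds (x := (1 : ℝ))).sub
        (tendsto_const_div_atTop_nhds_zero_nat (1 + logb 2 a)))
  filter_upwards [hlim.eventually_const_lt hεa, eventually_ge_atTop 1,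
    tendsto_two_pow_sub_one_atTop.eventually_ge_atTop a] with ν hlt hν han
  rw [one_sub_C, sub_sub_cancel]
  exact hlt.le.trans (mul_one_sub_div_le_H_div ha ht hν han)

lemma two_mul_sub_three_le (t : ℕ) :
    2 * (t : ℝ) - 3 ≤ 2 * t - 2 - 1 / (Nat.factorial (t - 1) : ℝ) := by
  have : 1 / (Nat.factorial (t - 1) : ℝ) ≤ 1 :=
    div_le_one_of_le₀ (by exact_mod_cast (t - 1).factorial_pos) (Nat.cast_nonneg _)
  linarith

lemma exists_one_sub_lt_div {ε : ℝ} (hε : 0 < ε) :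
    ∃ t : ℕ, 2 ≤ t ∧
      1 - ε < (2 * (t : ℝ) - 2 - 1 / (Nat.factorial (t - 1) : ℝ)) / (2 * t) := by
  obtain ⟨t, ht⟩ := exists_nat_gt (2 / ε)
  refine ⟨max 2 t, le_max_left _ _, ?_⟩
  have hT : (2 : ℝ) / ε < max 2 t := ht.trans_le (by exact_mod_cast le_max_right 2 t)
  have hT2 : (2 : ℝ) ≤ max 2 t := by exact_mod_cast le_max_left 2 t
  rw [div_lt_iff₀ hε] at hT
  rw [lt_div_iff₀ (by positivity)]
  nlinarith [two_mul_sub_three_le (max 2 t)]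

/-- for every `ε > 0` there exist `t ≥ 2` and `V ≥ 1` such that for
all `ν ≥ V`, with `n = 2^ν − 1`, `p = (2t − 2 − 1/(t−1)!)/n` and `R = 1 − 2νt/n`,
one has `0 < p < 1/2`, `0 < R < 1`, and `(1 − C(p))/(1 − R) ≥ 1 − ε`. -/
theorem stmt13 (ε : ℝ) (hε : 0 < ε) :
    ∃ t : ℕ, 2 ≤ t ∧ ∃ V : ℕ, 1 ≤ V ∧ ∀ ν : ℕ, V ≤ ν →
      (0 < (2 * (t : ℝ) - 2 - 1 / (Nat.factorial (t - 1) : ℝ)) / ((2 : ℝ) ^ ν - 1)) ∧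
      ((2 * (t : ℝ) - 2 - 1 / (Nat.factorial (t - 1) : ℝ)) / ((2 : ℝ) ^ ν - 1) < 1 / 2) ∧
      (0 < 1 - 2 * (ν : ℝ) * (t : ℝ) / ((2 : ℝ) ^ ν - 1)) ∧
      (1 - 2 * (ν : ℝ) * (t : ℝ) / ((2 : ℝ) ^ ν - 1) < 1) ∧
      (1 - ε ≤
        (1 - C ((2 * (t : ℝ) - 2 - 1 / (Nat.factorial (t - 1) : ℝ)) / ((2 : ℝ) ^ ν - 1))) /
          (1 - (1 - 2 * (ν : ℝ) * (t : ℝ) / ((2 : ℝ) ^ ν - 1)))) := by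
  obtain ⟨t, ht, hεt⟩ := exists_one_sub_lt_div hε
  have ht0 : (0 : ℝ) < t := by positivity
  have ha : 0 < 2 * (t : ℝ) - 2 - 1 / (Nat.factorial (t - 1) : ℝ) := by
    have : (2 : ℝ) ≤ t := by exact_mod_cast ht
    linarith [two_mul_sub_three_le t]
  obtain ⟨V, hV⟩ := eventually_atTop.1 <| (eventually_div_two_pow_sub_one_mem ha).and <|
    (eventually_one_sub_mul_div_two_pow_sub_one_mem ht0).and
      (eventually_one_sub_le_redundancy ha ht0 hεt)
  refine ⟨t, ht, max V 1, le_max_right V 1, fun ν hν ↦ ?_⟩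
  obtain ⟨⟨hp0, hp⟩, ⟨hR0, hR⟩, hred⟩ := hV ν (le_of_max_le_left hν)
  exact ⟨hp0, hp, hR0, hR, hred⟩
end
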